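/- Let Γ be a non-conference (v,k,λ,μ)-strongly regular graph with integer eigenvalues k, ν₂ > ν₃, and let the group G act regularly on the vertices of Γ; fix a vertex α and let Δ = {g ∈ G : α^g ~ α} ∪ {1}, Δᶜ = G \ Δ. If ν₂ − ν₃ divides neither μ − ν₃(ν₂+1) nor v − 2k + λ − ν₃(ν₂+1), then for every nontrivial x ∈ G, both x^G ∩ Δ ≠ ∅ and x^G ∩ Δᶜ ≠ ∅. -/

import Mathlib

/-!
Let `A` be the adjacency matrix and `J` the all-ones matrix of `Γ`. The matrix
`E = (A - ν₃ I - (k - ν₃)/v J) / (ν₂ - ν₃)` is the idempotent projecting onto the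
`ν₂`-eigenspace, and it commutes with the permutation matrix `P` of `x`, which is an
automorphism of finite order `N`. Hence `(PE)^(N+1) = PE`, so the eigenvalues of `PE` are
algebraic integers and its rational trace is an integer. Expanding the trace, with
`tr P = 0` (the action is free) and `tr PJ = v`, gives
`ν₂ - ν₃ ∣ #{β : x • β ~ β} - (k - ν₃)`.
If the class of `x` missed `Δ`, transitivity would give `#{β : x • β ~ β} = 0`; if it lay
inside `Δ`, it would give `#{β : x • β ~ β} = v`. Since `k - ν₃ = μ - ν₃(ν₂+1)` and
`v - k + ν₃ ≡ v - 2k + λ - ν₃(ν₂+1) (mod ν₂ - ν₃)`, both contradict the hypotheses.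
-/

open Polynomial Matrix Finset Equiv SimpleGraph

theorem vieta_of_eq_quadratic_formula {a c p q : ℝ} (ha : a = (p + √(p ^ 2 + 4 * q)) / 2)
    (hc : c = (p - √(p ^ 2 + 4 * q)) / 2) (hca : c < a) : a + c = p ∧ a * c = -q := by
  have hdisc : 0 ≤ p ^ 2 + 4 * q := by
    by_contra hneg
    rw [Real.sqrt_eq_zero_of_nonpos (le_of_not_ge hneg)] at ha hc
    linarith
  refine ⟨by rw [ha, hc]; ring, ?_⟩
  rw [ha, hc]
  linear_combination (-1 / 4 : ℝ) * Real.sq_sqrt hdisc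

namespace Matrix

variable {ι : Type*} [Fintype ι] [DecidableEq ι]

theorem isRoot_of_aeval_eq_zero_of_isRoot_charpoly {K : Type*} [Field K] {A : Matrix ι ι K}
    {p : K[X]} (hp : aeval A p = 0) {r : K} (hr : A.charpoly.IsRoot r) : p.IsRoot r := by
  have hmem := spectrum.subset_polynomial_aeval A p ⟨r, mem_spectrum_of_isRoot_charpoly hr, rfl⟩
  rw [hp, spectrum.mem_iff, sub_zero] at hmem
  by_contra hne
  exact hmem ((IsUnit.mk0 _ hne).map _)

theorem isIntegral_trace_of_aeval_eq_zero {K : Type*} [Field K] [IsAlgClosed K]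
    {A : Matrix ι ι K} {p : ℤ[X]} (hmonic : p.Monic) (hp : aeval A p = 0) :
    IsIntegral ℤ A.trace := by
  rw [trace_eq_sum_roots_charpoly]
  refine IsIntegral.multiset_sum fun r hr => ⟨p, hmonic, ?_⟩
  have hroot := isRoot_of_aeval_eq_zero_of_isRoot_charpoly (p := p.map (algebraMap ℤ K))
    (by rwa [aeval_map_algebraMap]) (isRoot_of_mem_roots hr)
  rwa [IsRoot, eval_map] at hroot

theorem exists_trace_eq_intCast_of_aeval_eq_zero {A : Matrix ι ι ℚ} {p : ℤ[X]} (hmonic : p.Monic)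
    (hp : aeval A p = 0) : ∃ z : ℤ, A.trace = z := by
  let f := Algebra.ofId ℚ (AlgebraicClosure ℚ)
  have hint : IsIntegral ℤ (f.mapMatrix A).trace := by
    refine isIntegral_trace_of_aeval_eq_zero hmonic ?_
    have hmap := aeval_algHom_apply (f.mapMatrix.restrictScalars ℤ) A p
    rwa [hp, map_zero] at hmap
  rw [AlgHom.mapMatrix_apply, ← AddMonoidHom.map_trace] at hint
  obtain ⟨z, hz⟩ := IsIntegrallyClosed.isIntegral_iff.mp
    ((isIntegral_algebraMap_iff (algebraMap ℚ (AlgebraicClosure ℚ)).injective).mp hint)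
  exact ⟨z, hz.symm⟩

end Matrix

namespace Equiv.Perm

variable {V : Type*} [Fintype V] [DecidableEq V] {R : Type*} [Semiring R] (σ : Perm V)

theorem permMatrix_pow_orderOf : σ.permMatrix R ^ orderOf σ = 1 := by
  have : σ.permMatrix R = Matrix.permMatrixHom σ⁻¹ := by simp
  rw [this, ← map_pow, inv_pow, pow_orderOf_eq_one, inv_one, map_one]

theorem commute_permMatrix_of_one : Commute (σ.permMatrix R) (of 1 : Matrix V V R) := by
  rw [Commute, SemiconjBy, PEquiv.toMatrix_toPEquiv_mul, PEquiv.mul_toMatrix_toPEquiv]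
  rfl

theorem trace_permMatrix_mul_of_one :
    trace (σ.permMatrix R * (of 1 : Matrix V V R)) = Fintype.card V := by
  rw [PEquiv.toMatrix_toPEquiv_mul]
  simp [trace]

end Equiv.Perm

namespace SimpleGraph

section StronglyRegular

variable {V : Type*} [Fintype V] {Γ : SimpleGraph V} [DecidableRel Γ.Adj]

theorem IsRegularOfDegree.adjMatrix_mul_of_one {R : Type*} [NonAssocSemiring R] {d : ℕ}
    (h : Γ.IsRegularOfDegree d) :
    Γ.adjMatrix R * of 1 = d • of 1 := by
  ext v w
  simp [adjMatrix_mul_apply, h v]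

theorem IsRegularOfDegree.of_one_mul_adjMatrix {R : Type*} [NonAssocSemiring R] {d : ℕ}
    (h : Γ.IsRegularOfDegree d) :
    of 1 * Γ.adjMatrix R = d • of 1 := by
  ext v w
  simp [mul_adjMatrix_apply, h w]

theorem of_one_mul_of_one {R : Type*} [NonAssocSemiring R] :
    (of 1 : Matrix V V R) * of 1 = Fintype.card V • of 1 := by
  ext v w
  simp [mul_apply]

variable [DecidableEq V] {n k l m : ℕ}

omit [Fintype V] in
theorem adjMatrix_compl_eq {R : Type*} [Ring R] :
    Γᶜ.adjMatrix R = of 1 - 1 - Γ.adjMatrix R := by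
  classical
  rw [← one_add_adjMatrix_add_compl_adjMatrix_eq_of_one R Γ,
    compl_adjMatrix_eq_adjMatrix_compl R Γ]
  abel

theorem IsSRGWith.adjMatrix_sq {R : Type*} [Ring R] (h : Γ.IsSRGWith n k l m) :
    Γ.adjMatrix R ^ 2 = k • 1 + l • Γ.adjMatrix R + m • (of 1 - 1 - Γ.adjMatrix R) := by
  rw [h.matrix_eq, adjMatrix_compl_eq]

theorem IsSRGWith.cast_param_eq {R : Type*} [CommRing R] [Nonempty V]
    (h : Γ.IsSRGWith n k l m) :
    (k : R) * (k - l - 1) = (n - k - 1) * m := by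
  have hA := h.regular.adjMatrix_mul_of_one (R := R)
  have hsq : Γ.adjMatrix R ^ 2 * of 1 = (k * k : ℕ) • of 1 := by
    rw [sq, Matrix.mul_assoc, hA, Matrix.mul_smul, hA, smul_smul]
  rw [h.adjMatrix_sq, Matrix.add_mul, Matrix.add_mul, Matrix.smul_mul, Matrix.smul_mul,
    Matrix.smul_mul, Matrix.sub_mul, Matrix.sub_mul, Matrix.one_mul, hA, of_one_mul_of_one,
    h.card] at hsq
  obtain ⟨v⟩ := ‹Nonempty V›
  have := congrFun (congrFun hsq v) v
  simp only [smul_of, nsmul_eq_mul, mul_one, of_add_of, of_sub_of, Matrix.add_apply, of_apply,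
    Pi.add_apply, Pi.natCast_apply, Pi.mul_apply, Pi.sub_apply, Pi.one_apply, Matrix.smul_apply,
    Nat.cast_mul] at this
  linear_combination -this

variable {K : Type*} [Field K]

variable (Γ) in
/-- For a strongly regular graph of degree `k` with further eigenvalues `r ≠ s`, the idempotent
projecting onto the `r`-eigenspace of the adjacency matrix. -/
noncomputable def eigenprojection (k : ℕ) (r s : K) : Matrix V V K :=
  (r - s)⁻¹ • (Γ.adjMatrix K - s • 1 - ((k - s) / Fintype.card V) • of 1)

theorem IsSRGWith.isIdempotentElem_eigenprojection [CharZero K] [Nonempty V] (h : Γ.IsSRGWith n k l m)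
    {r s : K} (hsum : r + s = l - m) (hprod : r * s = m - k) (hrs : r ≠ s) :
    IsIdempotentElem (Γ.eigenprojection k r s) := by
  have hv : (Fintype.card V : K) ≠ 0 := Nat.cast_ne_zero.mpr Fintype.card_ne_zero
  set c : K := (k - s) / Fintype.card V with hc
  have hcv : c * Fintype.card V = k - s := div_mul_cancel₀ _ hv
  have hcr : c * (k - r) = m := by
    rw [hc, div_mul_eq_mul_div, div_eq_iff hv, h.card]
    linear_combination h.cast_param_eq (R := K) - (k : K) * hsum + hprod
  have hsq := h.adjMatrix_sq (R := K)
  rw [sq] at hsq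
  have hM : (Γ.adjMatrix K - s • 1 - c • of 1) * (Γ.adjMatrix K - s • 1 - c • of 1) =
      (r - s) • (Γ.adjMatrix K - s • 1 - c • of 1) := by
    simp only [sub_mul, mul_sub, smul_mul_assoc, mul_smul_comm, Matrix.one_mul, Matrix.mul_one,
      hsq, h.regular.adjMatrix_mul_of_one, h.regular.of_one_mul_adjMatrix, of_one_mul_of_one]
    linear_combination (norm := module) -(hsum • Γ.adjMatrix K) + hprod • (1 : Matrix V V K) +
      (c * hcv - hcr) • of 1
  have hrs' : r - s ≠ 0 := sub_ne_zero.mpr hrs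
  rw [IsIdempotentElem, eigenprojection, smul_mul_smul_comm, ← hc, hM, smul_smul, mul_assoc,
    inv_mul_cancel₀ hrs', mul_one]

namespace Iso

variable {R : Type*} [NonAssocSemiring R] (φ : Γ ≃g Γ)

theorem commute_permMatrix_adjMatrix :
    Commute (Perm.permMatrix R φ.toEquiv) (Γ.adjMatrix R) := by
  rw [Commute, SemiconjBy, PEquiv.toMatrix_toPEquiv_mul, PEquiv.mul_toMatrix_toPEquiv]
  ext v w
  have hadj : Γ.Adj (φ.toEquiv v) w ↔ Γ.Adj v (φ.toEquiv.symm w) := by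
    conv_lhs => rw [← φ.toEquiv.apply_symm_apply w]
    exact φ.map_adj_iff
  simp only [submatrix_apply, id_eq, adjMatrix_apply, hadj]

theorem trace_permMatrix_mul_adjMatrix :
    trace (Perm.permMatrix R φ.toEquiv * Γ.adjMatrix R) = #{v | Γ.Adj (φ v) v} := by
  rw [PEquiv.toMatrix_toPEquiv_mul, trace]
  simp

end Iso

theorem IsSRGWith.sub_dvd_card_adj_apply [Nonempty V] (h : Γ.IsSRGWith n k l m) {r s : ℤ}
    (hsum : r + s = l - m) (hprod : r * s = m - k) (hrs : r ≠ s) (φ : Γ ≃g Γ) :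
    r - s ∣ #{v | Γ.Adj (φ v) v} - s * (Function.fixedPoints φ).ncard - (k - s) := by
  set P := Perm.permMatrix ℚ φ.toEquiv with hPdef
  set E := Γ.eigenprojection k (r : ℚ) s with hEdef
  have hE : IsIdempotentElem E :=
    h.isIdempotentElem_eigenprojection (by exact_mod_cast hsum) (by exact_mod_cast hprod)
      (by exact_mod_cast hrs)
  have hPE : Commute P E :=
    ((φ.commute_permMatrix_adjMatrix.sub_right ((Commute.one_right _).smul_right _)).sub_right
      ((Perm.commute_permMatrix_of_one _).smul_right _)).smul_right _
  have hpow : (P * E) ^ (orderOf φ.toEquiv + 1) = P * E := by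
    rw [hPE.mul_pow, pow_succ, Perm.permMatrix_pow_orderOf, one_mul, hE.pow_succ_eq]
  obtain ⟨z, hz⟩ := exists_trace_eq_intCast_of_aeval_eq_zero (A := P * E)
    (p := X ^ (orderOf φ.toEquiv + 1) - X)
    (monic_X_pow_sub (by rw [degree_X]; exact_mod_cast Nat.succ_lt_succ (orderOf_pos _)))
    (by rw [aeval_sub, aeval_X_pow, aeval_X, hpow, sub_self])
  refine ⟨z, ?_⟩
  have hv : (Fintype.card V : ℚ) ≠ 0 := Nat.cast_ne_zero.mpr Fintype.card_ne_zero
  have hrs' : (r - s : ℚ) ≠ 0 := sub_ne_zero.mpr (by exact_mod_cast hrs)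
  have htrace : trace (P * E) * (r - s) =
      #{v | Γ.Adj (φ v) v} - s * (Function.fixedPoints φ).ncard - (k - s) := by
    simp only [hPdef, hEdef, eigenprojection, Matrix.mul_smul, Matrix.mul_sub, Matrix.mul_one,
      trace_smul, trace_sub, Matrix.trace_permutation, Perm.trace_permMatrix_mul_of_one,
      φ.trace_permMatrix_mul_adjMatrix, smul_eq_mul]
    field_simp
    rfl
  rw [hz] at htrace
  exact_mod_cast htrace.symm.trans (mul_comm _ _)

end StronglyRegular

section RegularAction

variable {V G : Type*} [Group G] [MulAction G V] {Γ : SimpleGraph V}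
  (hpres : ∀ (g : G) (a b : V), Γ.Adj a b ↔ Γ.Adj (g • a) (g • b))

def smulIso (g : G) : Γ ≃g Γ where
  toEquiv := MulAction.toPerm g
  map_rel_iff' := (hpres g _ _).symm

theorem fixedPoints_smulIso_eq_empty (hfree : ∀ (g : G) (a : V), g • a = a → g = 1)
    {x : G} (hx : x ≠ 1) : Function.fixedPoints (smulIso hpres x) = ∅ :=
  Set.eq_empty_of_forall_notMem fun v hv => hx (hfree x v hv)

include hpres in
theorem adj_conj_smul_iff (g x : G) (v : V) :
    Γ.Adj ((g * x * g⁻¹) • g • v) (g • v) ↔ Γ.Adj (x • v) v := by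
  rw [mul_smul, mul_smul, inv_smul_smul, ← hpres]

variable [Fintype V] [DecidableRel Γ.Adj] (htrans : ∀ a b : V, ∃ g : G, g • a = b)
  {α : V} {x : G}
include htrans

theorem card_adj_smulIso_eq_zero (hα : ∀ g : G, ¬ Γ.Adj ((g * x * g⁻¹) • α) α) :
    #{v | Γ.Adj (smulIso hpres x v) v} = 0 := by
  refine card_eq_zero.mpr (filter_eq_empty_iff.mpr fun v _ hadj => ?_)
  obtain ⟨g, rfl⟩ := htrans v α
  exact hα g ((adj_conj_smul_iff hpres g x v).mpr hadj)

theorem card_adj_smulIso_eq_card (hα : ∀ g : G, Γ.Adj ((g * x * g⁻¹) • α) α) :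
    #{v | Γ.Adj (smulIso hpres x v) v} = Fintype.card V := by
  rw [filter_true_of_mem fun v _ => ?_, card_univ]
  obtain ⟨g, rfl⟩ := htrans v α
  exact (adj_conj_smul_iff hpres g x v).mp (hα g)

end RegularAction

end SimpleGraph

theorem regular_action_both_nonempty_general {V G : Type*} [Fintype V] [Group G]
    (Γ : SimpleGraph V) [DecidableRel Γ.Adj] [MulAction G V]
    (v k l m : ℕ) (ν₂ ν₃ : ℤ)
    (h : Γ.IsSRGWith v k l m)
    (hν₂ : (ν₂ : ℝ) = ((l : ℝ) - m + Real.sqrt (((l : ℝ) - m) ^ 2 + 4 * ((k : ℝ) - m))) / 2)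
    (hν₃ : (ν₃ : ℝ) = ((l : ℝ) - m - Real.sqrt (((l : ℝ) - m) ^ 2 + 4 * ((k : ℝ) - m))) / 2)
    (h23 : ν₂ > ν₃)
    (hd1 : ¬ (ν₂ - ν₃ ∣ (m : ℤ) - ν₃ * (ν₂ + 1)))
    (hd2 : ¬ (ν₂ - ν₃ ∣ (v : ℤ) - 2 * k + l - ν₃ * (ν₂ + 1)))
    (hpres : ∀ (g : G) (a b : V), Γ.Adj a b ↔ Γ.Adj (g • a) (g • b))
    (htrans : ∀ a b : V, ∃ g : G, g • a = b)
    (hfree : ∀ (g : G) (a : V), g • a = a → g = 1)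
    (α : V) (x : G) (hx : x ≠ 1) :
    ({y : G | ∃ g : G, g * x * g⁻¹ = y} ∩
        ({g : G | Γ.Adj (g • α) α} ∪ {1})).Nonempty ∧
    ({y : G | ∃ g : G, g * x * g⁻¹ = y} ∩
        (({g : G | Γ.Adj (g • α) α} ∪ {1}) : Set G)ᶜ).Nonempty := by
  classical
  have : Nonempty V := ⟨α⟩
  obtain ⟨hsumℝ, hprodℝ⟩ := vieta_of_eq_quadratic_formula hν₂ hν₃ (by exact_mod_cast h23)
  have hsum : ν₂ + ν₃ = (l : ℤ) - m := by exact_mod_cast hsumℝ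
  have hprod : ν₂ * ν₃ = (m : ℤ) - k := by exact_mod_cast hprodℝ.trans (neg_sub _ _)
  have hdvd := h.sub_dvd_card_adj_apply hsum hprod h23.ne' (smulIso hpres x)
  rw [fixedPoints_smulIso_eq_empty hpres hfree hx, Set.ncard_empty] at hdvd
  constructor
  · by_contra hΔ
    rw [card_adj_smulIso_eq_zero hpres htrans fun g hadj => hΔ ⟨_, ⟨g, rfl⟩, Or.inl hadj⟩]
      at hdvd
    exact hd1 <| (dvd_neg.mpr hdvd).trans <| dvd_of_eq <| by push_cast; linear_combination hprod
  · by_contra hΔ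
    rw [card_adj_smulIso_eq_card hpres htrans fun g => by_contra fun hnadj =>
      hΔ ⟨_, ⟨g, rfl⟩, fun hmem => hmem.elim hnadj fun h1 => hx (conj_eq_one_iff.mp h1)⟩,
      h.card] at hdvd
    exact hd2 <| (dvd_add hdvd dvd_rfl).trans <| dvd_of_eq <| by
      push_cast; linear_combination hsum + hprod

/-- Let `Γ` be a non-conference `(v,k,λ,μ)`-strongly regular graph with integer
eigenvalues `k, ν₂ > ν₃`, and let `G` act regularly on the vertices of `Γ`; fix a
vertex `α` and let `Δ = {g : Γ.Adj (g • α) α} ∪ {1}`, `Δᶜ = G \ Δ`.  If `ν₂ - ν₃`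
divides neither `μ - ν₃(ν₂+1)` nor `v - 2k + λ - ν₃(ν₂+1)`, then for every
nontrivial `x ∈ G`, both `x^G ∩ Δ ≠ ∅` and `x^G ∩ Δᶜ ≠ ∅`. -/
theorem regular_action_both_nonempty {V G : Type*} [Fintype V] [Group G] [Fintype G]
    (Γ : SimpleGraph V) [DecidableRel Γ.Adj] [MulAction G V]
    (v k l m : ℕ) (ν₂ ν₃ : ℤ)
    (h : Γ.IsSRGWith v k l m)
    (hconf : ¬ (2 * (k : ℤ) = (v : ℤ) - 1 ∧ 4 * (l : ℤ) = (v : ℤ) - 5 ∧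
      4 * (m : ℤ) = (v : ℤ) - 1))
    (hν₂ : (ν₂ : ℝ) = ((l : ℝ) - m + Real.sqrt (((l : ℝ) - m) ^ 2 + 4 * ((k : ℝ) - m))) / 2)
    (hν₃ : (ν₃ : ℝ) = ((l : ℝ) - m - Real.sqrt (((l : ℝ) - m) ^ 2 + 4 * ((k : ℝ) - m))) / 2)
    (h23 : ν₂ > ν₃)
    (hd1 : ¬ (ν₂ - ν₃ ∣ (m : ℤ) - ν₃ * (ν₂ + 1)))
    (hd2 : ¬ (ν₂ - ν₃ ∣ (v : ℤ) - 2 * k + l - ν₃ * (ν₂ + 1)))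
    (hpres : ∀ (g : G) (a b : V), Γ.Adj a b ↔ Γ.Adj (g • a) (g • b))
    (htrans : ∀ a b : V, ∃ g : G, g • a = b)
    (hfree : ∀ (g : G) (a : V), g • a = a → g = 1)
    (α : V) (x : G) (hx : x ≠ 1) :
    ({y : G | ∃ g : G, g * x * g⁻¹ = y} ∩
        ({g : G | Γ.Adj (g • α) α} ∪ {1})).Nonempty ∧
    ({y : G | ∃ g : G, g * x * g⁻¹ = y} ∩
        (({g : G | Γ.Adj (g • α) α} ∪ {1}) : Set G)ᶜ).Nonempty :=
  regular_action_both_nonempty_general Γ v k l m ν₂ ν₃ h hν₂ hν₃ h23 hd1 hd2 hpres htrans hfree α x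
    hx
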